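/- arXiv:2504.16383 — 3 statements merged into one kernel-verified Lean document; each statement's English description precedes it below -/
import Mathlib

section
/- Let ξ = (v, ω) ∈ ℝ⁶ with v, ω ∈ ℝ³ and ‖ω‖ = 1, and let θ ∈ ℝ. Then exp(θ ξ̂) is the 4×4 matrix with block form [[exp(θ ω̂), (I₃ − exp(θ ω̂))(ω × v) + ω ωᵀ v θ], [0₁ₓ₃, 1]]. -/
open Matrix

/-- The hat map: the unique 3×3 skew-symmetric matrix `ω̂` with `ω̂ x = ω × x` for all `x`. -/
noncomputable def hat (ω : Fin 3 → ℝ) : Matrix (Fin 3) (Fin 3) ℝ :=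
  !![0, -ω 2, ω 1; ω 2, 0, -ω 0; -ω 1, ω 0, 0]

/-- The se(3) hat map of a twist `ξ = (v, ω)`: the 4×4 matrix with upper-left block `ω̂`,
upper-right block `v` and zero bottom row. -/
noncomputable def se3hat (v ω : Fin 3 → ℝ) : Matrix (Fin 3 ⊕ Fin 1) (Fin 3 ⊕ Fin 1) ℝ :=
  Matrix.fromBlocks (hat ω) (Matrix.of fun i (_ : Fin 1) => v i) 0 0

/-!
The twist is a screw motion whose axis passes through `q = ω × v`. Since `‖ω‖ = 1`, we have
`v = (ω ⬝ v) ω - ω̂ q`, so conjugating `ξ̂` by the translation `[[I, q], [0, 1]]` turns it into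
`[[ω̂, (ω ⬝ v) ω], [0, 0]]`. There the translation part lies in the kernel of `ω̂`, so rotation and
translation commute and the exponential is `[[exp(θ ω̂), θ (ω ⬝ v) ω], [0, 1]]`; undoing the
conjugation produces the term `(I - exp(θ ω̂)) q`.
-/

open NormedSpace

theorem NormedSpace.exp_eq_one_add_of_mul_self_eq_zero {𝔸 : Type*} [Ring 𝔸] [TopologicalSpace 𝔸]
    [IsTopologicalRing 𝔸] [Algebra ℚ 𝔸] {x : 𝔸} (hx : x * x = 0) :
    exp x = 1 + x := by
  have hpow : ∀ k, x ^ (k + 2) = 0 := fun k => by rw [pow_add, sq, hx, mul_zero]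
  rw [exp_eq_tsum_rat]
  dsimp only
  rw [tsum_eq_sum (s := Finset.range 2)]
  · simp [Finset.sum_range_succ]
  · intro k hk
    obtain ⟨k, rfl⟩ : ∃ j, k = j + 2 := ⟨k - 2, by simp at hk; omega⟩
    rw [hpow, smul_zero]

namespace Matrix

variable {n m 𝔸 : Type*} [Fintype n] [DecidableEq n] [Fintype m] [DecidableEq m]
  [NormedRing 𝔸] [NormedAlgebra ℚ 𝔸] [CompleteSpace 𝔸]

open scoped Norms.Operator in
theorem exp_fromBlocks_diagonal (A : Matrix n n 𝔸) (D : Matrix m m 𝔸) :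
    exp (fromBlocks A 0 0 D) = fromBlocks (exp A) 0 0 (exp D) := by
  -- The operator-norm instances agree with the plain matrix ring and topology only up to
  -- unfolding, so completeness and the final identification are supplied by hand.
  have : @CompleteSpace (Matrix n n 𝔸) PseudoMetricSpace.toUniformSpace := instCompleteSpace _ _ _
  have : @CompleteSpace (Matrix m m 𝔸) PseudoMetricSpace.toUniformSpace := instCompleteSpace _ _ _
  let f : Matrix n n 𝔸 × Matrix m m 𝔸 →+* Matrix (n ⊕ m) (n ⊕ m) 𝔸 :=
    { toFun := fun p => fromBlocks p.1 0 0 p.2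
      map_one' := fromBlocks_one
      map_mul' := fun p q => by simp [fromBlocks_multiply]
      map_zero' := fromBlocks_zero
      map_add' := fun p q => by simp [fromBlocks_add] }
  have hf : Continuous f := by
    change Continuous fun p : Matrix n n 𝔸 × Matrix m m 𝔸 => fromBlocks p.1 0 0 p.2
    fun_prop
  have h := (map_exp f hf (A, D)).symm
  simp only [f, RingHom.coe_mk, MonoidHom.coe_mk, OneHom.coe_mk, Prod.fst_exp, Prod.snd_exp] at h
  convert h using 2 <;> rfl

theorem exp_fromBlocks_of_mul_eq_zero {A : Matrix n n 𝔸} {b : Matrix n m 𝔸} (hb : A * b = 0) :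
    exp (fromBlocks A b 0 (0 : Matrix m m 𝔸)) = fromBlocks (exp A) b 0 1 := by
  have hsplit : fromBlocks A b 0 (0 : Matrix m m 𝔸) =
      fromBlocks 0 b 0 0 + fromBlocks A 0 0 (0 : Matrix m m 𝔸) := by
    simp [fromBlocks_add]
  have hcomm : Commute (fromBlocks 0 b 0 (0 : Matrix m m 𝔸)) (fromBlocks A 0 0 0) := by
    simp [Commute, SemiconjBy, fromBlocks_multiply, hb]
  have hnil : fromBlocks 0 b 0 (0 : Matrix m m 𝔸) * fromBlocks (0 : Matrix n n 𝔸) b 0 0 = 0 := by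
    simp [fromBlocks_multiply]
  rw [hsplit, exp_add_of_commute _ _ hcomm, exp_eq_one_add_of_mul_self_eq_zero hnil,
    exp_fromBlocks_diagonal, exp_zero, ← fromBlocks_one, fromBlocks_add, fromBlocks_multiply]
  simp

theorem exp_fromBlocks_of_eq_sub_mul {A : Matrix n n 𝔸} {b c q : Matrix n m 𝔸}
    (hc : A * c = 0) (hb : b = c - A * q) :
    exp (fromBlocks A b 0 (0 : Matrix m m 𝔸)) = fromBlocks (exp A) ((1 - exp A) * q + c) 0 1 := by
  let P : (Matrix (n ⊕ m) (n ⊕ m) 𝔸)ˣ :=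
    { val := fromBlocks 1 q 0 1
      inv := fromBlocks 1 (-q) 0 1
      val_inv := by simp [fromBlocks_multiply, ← fromBlocks_one]
      inv_val := by simp [fromBlocks_multiply, ← fromBlocks_one] }
  have hconj : fromBlocks A b 0 (0 : Matrix m m 𝔸) = P.val * fromBlocks A c 0 0 * (P⁻¹).val := by
    simp [P, fromBlocks_multiply, hb, sub_eq_neg_add]
  rw [hconj, exp_units_conj, exp_fromBlocks_of_mul_eq_zero hc, Matrix.sub_mul, Matrix.one_mul]
  simp [P, fromBlocks_multiply]
  abel

end Matrix

theorem hat_mulVec (ω x : Fin 3 → ℝ) : hat ω *ᵥ x = ω ⨯₃ x := by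
  ext i
  fin_cases i <;> simp [hat, cross_apply, mulVec, dotProduct, Fin.sum_univ_three] <;> ring

theorem cross_cross_self_add_eq_smul {R : Type*} [CommRing R] {ω : Fin 3 → R} (hω : ω ⬝ᵥ ω = 1)
    (v : Fin 3 → R) : ω ⨯₃ (ω ⨯₃ v) + v = (ω ⬝ᵥ v) • ω := by
  rw [cross_cross_eq_smul_sub_smul', hω, one_smul, sub_add_cancel]

/-- For a twist `ξ = (v, ω)` with `‖ω‖ = 1`, the exponential `exp(θ ξ̂)` has block form
`[[exp(θ ω̂), (I₃ − exp(θ ω̂))(ω × v) + ω ωᵀ v θ], [0, 1]]`. -/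
theorem exp_twist_blocks (v : Fin 3 → ℝ) (ω : EuclideanSpace ℝ (Fin 3)) (hω : ‖ω‖ = 1)
    (θ : ℝ) :
    NormedSpace.exp (θ • se3hat v ω) =
      Matrix.fromBlocks (NormedSpace.exp (θ • hat ω))
        (Matrix.of fun i (_ : Fin 1) =>
          (((1 : Matrix (Fin 3) (Fin 3) ℝ) - NormedSpace.exp (θ • hat ω)).mulVec
              (crossProduct ω v) + ((ω ⬝ᵥ v) * θ) • (show Fin 3 → ℝ from ω)) i)
        0 1 := by
  set w : Fin 3 → ℝ := ω.ofLp
  have hunit : w ⬝ᵥ w = 1 := by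
    have h := real_inner_self_eq_norm_sq ω
    rwa [hω, one_pow, EuclideanSpace.inner_eq_star_dotProduct, star_trivial] at h
  have hξ : θ • se3hat v w = fromBlocks (θ • hat w) (replicateCol (Fin 1) (θ • v)) 0 0 := by
    rw [se3hat, fromBlocks_smul, smul_zero, smul_zero]
    rfl
  have hc : (θ • hat w) * replicateCol (Fin 1) (((w ⬝ᵥ v) * θ) • w) = 0 := by
    rw [← replicateCol_mulVec, smul_mulVec, mulVec_smul, hat_mulVec, cross_self]
    simp
  have hb : replicateCol (Fin 1) (θ • v) = replicateCol (Fin 1) (((w ⬝ᵥ v) * θ) • w)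
      - (θ • hat w) * replicateCol (Fin 1) (w ⨯₃ v) := by
    have hv : θ • v = ((w ⬝ᵥ v) * θ) • w - θ • (w ⨯₃ (w ⨯₃ v)) := by
      rw [mul_comm, ← smul_smul, ← cross_cross_self_add_eq_smul hunit v]
      module
    rw [← replicateCol_mulVec, smul_mulVec, hat_mulVec, hv]
    rfl
  rw [hξ, exp_fromBlocks_of_eq_sub_mul hc hb, ← replicateCol_mulVec, ← replicateCol_add]
  rfl
end

section
/- Let ω, q ∈ ℝ³ with ‖ω‖ = 1, let ξ = (−ω × q, ω) ∈ ℝ⁶ (a zero-pitch revolute twist with axis through q in direction ω), and let θ ∈ ℝ. Then exp(θ ξ̂) = [[exp(θ ω̂), (I₃ − exp(θ ω̂)) q], [0₁ₓ₃, 1]]. -/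
/-!
Since `ω̂ q = ω × q`, the twist `θ ξ̂` is the conjugate of the pure rotation `diag(θ ω̂, 0)` by the
translation `[[I₃, q], [0, 1]]`. The exponential is therefore the conjugate of `diag(exp(θ ω̂), 1)`
by the same translation, and multiplying out gives the translational part `(I₃ − exp(θ ω̂)) q`.
-/

open Matrix

open NormedSpace

namespace Matrix

variable {m n α : Type*} [Fintype m] [Fintype n]

/- With the operator norm, the uniformity on matrices is the product uniformity only up to
unfolding instances, so instance search does not find completeness on its own. -/
open scoped Norms.Operator in
theorem completeSpace_linftyOp [SeminormedAddCommGroup α] [CompleteSpace α] :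
    @CompleteSpace (Matrix m n α) PseudoMetricSpace.toUniformSpace :=
  inferInstanceAs (@CompleteSpace (Matrix m n α) (instUniformSpace m n α))

variable [DecidableEq m] [DecidableEq n]

def fromBlocksDiagRingHom [Semiring α] :
    Matrix m m α × Matrix n n α →+* Matrix (m ⊕ n) (m ⊕ n) α where
  toFun p := fromBlocks p.1 0 0 p.2
  map_one' := fromBlocks_one
  map_mul' p q := by simp [fromBlocks_multiply]
  map_zero' := by simp
  map_add' p q := by simp [fromBlocks_add]

def fromBlocksShear [Ring α] (c : Matrix m n α) : (Matrix (m ⊕ n) (m ⊕ n) α)ˣ where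
  val := fromBlocks 1 c 0 1
  inv := fromBlocks 1 (-c) 0 1
  val_inv := by simp [fromBlocks_multiply, fromBlocks_one]
  inv_val := by simp [fromBlocks_multiply, fromBlocks_one]

theorem fromBlocks_neg_mul_zero_zero_eq_conj [Ring α] (A : Matrix m m α) (c : Matrix m n α) :
    fromBlocks A (-(A * c)) 0 0 =
      (fromBlocksShear c : Matrix (m ⊕ n) (m ⊕ n) α) * fromBlocks A 0 0 0 *
        (↑(fromBlocksShear c)⁻¹ : Matrix (m ⊕ n) (m ⊕ n) α) := by
  simp [fromBlocksShear, fromBlocks_multiply]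

variable [NormedRing α] [NormedAlgebra ℚ α] [CompleteSpace α]

open scoped Norms.Operator in
theorem exp_fromBlocks_zero_zero (A : Matrix m m α) (B : Matrix n n α) :
    exp (fromBlocks A 0 0 B) = fromBlocks (exp A) 0 0 (exp B) := by
  have := completeSpace_linftyOp (m := m) (n := m) (α := α)
  have := completeSpace_linftyOp (m := n) (n := n) (α := α)
  have hAB : exp (A, B) = (exp A, exp B) := Prod.ext (Prod.fst_exp _) (Prod.snd_exp _)
  calc exp (fromBlocks A 0 0 B) = fromBlocksDiagRingHom (exp (A, B)) :=
        (map_exp fromBlocksDiagRingHom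
          (continuous_fst.matrix_fromBlocks continuous_const continuous_const continuous_snd)
          (A, B)).symm
    _ = fromBlocks (exp A) 0 0 (exp B) := congrArg fromBlocksDiagRingHom hAB

theorem exp_fromBlocks_neg_mul_zero_zero (A : Matrix m m α) (c : Matrix m n α) :
    exp (fromBlocks A (-(A * c)) 0 0) =
      fromBlocks (exp A) ((1 - exp A) * c) 0 (1 : Matrix n n α) := by
  rw [fromBlocks_neg_mul_zero_zero_eq_conj, exp_units_conj, exp_fromBlocks_zero_zero, exp_zero]
  simp [fromBlocksShear, fromBlocks_multiply, Matrix.sub_mul, neg_add_eq_sub]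

end Matrix

theorem smul_se3hat_neg_crossProduct (θ : ℝ) (ω q : Fin 3 → ℝ) :
    θ • se3hat (-(ω ⨯₃ q)) ω =
      fromBlocks (θ • hat ω) (-((θ • hat ω) * replicateCol (Fin 1) q)) 0 0 := by
  rw [← replicateCol_mulVec, smul_mulVec, hat_mulVec, replicateCol_smul, ← smul_neg, se3hat,
    fromBlocks_smul, smul_zero, smul_zero]
  rfl

theorem exp_revolute_twist_general (ω : EuclideanSpace ℝ (Fin 3)) (q : Fin 3 → ℝ)
    (θ : ℝ) :
    NormedSpace.exp (θ • se3hat (-(crossProduct ω q)) ω) =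
      Matrix.fromBlocks (NormedSpace.exp (θ • hat ω))
        (Matrix.of fun i (_ : Fin 1) =>
          (((1 : Matrix (Fin 3) (Fin 3) ℝ) - NormedSpace.exp (θ • hat ω)).mulVec q) i)
        0 1 := by
  rw [smul_se3hat_neg_crossProduct, exp_fromBlocks_neg_mul_zero_zero, ← replicateCol_mulVec]
  rfl

/-- For a zero-pitch revolute twist `ξ = (−ω × q, ω)` with unit axis direction `ω` passing
through the point `q`, the exponential satisfies
`exp(θ ξ̂) = [[exp(θ ω̂), (I₃ − exp(θ ω̂)) q], [0, 1]]`. -/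
theorem exp_revolute_twist (ω : EuclideanSpace ℝ (Fin 3)) (q : Fin 3 → ℝ) (hω : ‖ω‖ = 1)
    (θ : ℝ) :
    NormedSpace.exp (θ • se3hat (-(crossProduct ω q)) ω) =
      Matrix.fromBlocks (NormedSpace.exp (θ • hat ω))
        (Matrix.of fun i (_ : Fin 1) =>
          (((1 : Matrix (Fin 3) (Fin 3) ℝ) - NormedSpace.exp (θ • hat ω)).mulVec q) i)
        0 1 :=
  exp_revolute_twist_general ω q θ
end

section
/- Let ξ₁, …, ξ_n be p×p real matrices, and for θ ∈ ℝ^n and 1 ≤ β ≤ n define L_β(θ) := exp(θ₁ ξ₁) ⋯ exp(θ_{β−1} ξ_{β−1}) and the instantaneous joint twist η_β(θ) := L_β(θ) ξ_β L_β(θ)⁻¹. Then for all 1 ≤ k, β ≤ n: (i) if k ≤ β − 1, then ∂η_β/∂θ_k = η_k(θ) η_β(θ) − η_β(θ) η_k(θ); (ii) if k ≥ β, then ∂η_β/∂θ_k = 0. -/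
/-!
Changing `θ_k` alone changes a single factor of `L_β(θ)` when `k < β`:
`L_β = L_k exp(θ_k ξ_k) R` with `R` independent of `θ_k`. Since
`L_k exp(s ξ_k) L_k⁻¹ = exp(s η_k)`, this gives `η_β = exp(θ_k η_k) Y exp(-θ_k η_k)` with `Y`
independent of `θ_k`, whose derivative in `θ_k` is the commutator `η_k η_β - η_β η_k`.
When `k ≥ β`, `L_β` does not involve `θ_k` at all.
-/

open Matrix

attribute [local instance] Matrix.normedAddCommGroup Matrix.normedSpace

/-- The partial product of exponentials `L_β(θ) = exp(θ₁ ξ₁) ⋯ exp(θ_{β−1} ξ_{β−1})`. -/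
noncomputable def poeBefore {p n : ℕ} (ξ : Fin n → Matrix (Fin p) (Fin p) ℝ)
    (θ : Fin n → ℝ) (β : Fin n) : Matrix (Fin p) (Fin p) ℝ :=
  ((((List.finRange n).filter (fun m => m < β)).map fun m =>
      NormedSpace.exp (θ m • ξ m)).prod)

/-- The instantaneous joint twist `η_β(θ) = L_β(θ) ξ_β L_β(θ)⁻¹`. -/
noncomputable def eta {p n : ℕ} (ξ : Fin n → Matrix (Fin p) (Fin p) ℝ)
    (θ : Fin n → ℝ) (β : Fin n) : Matrix (Fin p) (Fin p) ℝ :=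
  poeBefore ξ θ β * ξ β * (poeBefore ξ θ β)⁻¹

theorem hasDerivAt_exp_smul_mul_mul_exp_neg_smul {𝕂 𝔸 : Type*} [RCLike 𝕂] [NormedRing 𝔸]
    [NormedAlgebra 𝕂 𝔸] [CompleteSpace 𝔸] (D Y : 𝔸) (t : 𝕂) :
    HasDerivAt (fun s : 𝕂 => NormedSpace.exp (s • D) * Y * NormedSpace.exp (-(s • D)))
      (D * (NormedSpace.exp (t • D) * Y * NormedSpace.exp (-(t • D))) -
        NormedSpace.exp (t • D) * Y * NormedSpace.exp (-(t • D)) * D) t := by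
  have hneg := hasDerivAt_exp_smul_const (-D) t
  simp only [smul_neg] at hneg
  convert ((hasDerivAt_exp_smul_const' D t).mul_const Y).mul hneg using 1
  · rfl
  · noncomm_ring

/-- `Matrix.normedAddCommGroup` is not a ring norm, but derivatives only depend on the topology,
which the operator norm induces as well. -/
theorem Matrix.hasDerivAt_exp_smul_mul_mul_exp_neg_smul {p : ℕ}
    (D Y : Matrix (Fin p) (Fin p) ℝ) (t : ℝ) :
    HasDerivAt (fun s : ℝ => NormedSpace.exp (s • D) * Y * NormedSpace.exp (-(s • D)))
      (D * (NormedSpace.exp (t • D) * Y * NormedSpace.exp (-(t • D))) -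
        NormedSpace.exp (t • D) * Y * NormedSpace.exp (-(t • D)) * D) t :=
  @_root_.hasDerivAt_exp_smul_mul_mul_exp_neg_smul ℝ _ _ Matrix.linftyOpNormedRing
    Matrix.linftyOpNormedAlgebra (FiniteDimensional.complete ℝ _) D Y t

theorem List.filter_lt_append_cons {α : Type*} [LinearOrder α] {l₁ l₂ : List α} {k : α}
    (h : (l₁ ++ k :: l₂).Pairwise (· < ·)) : (l₁ ++ k :: l₂).filter (· < k) = l₁ := by
  obtain ⟨-, hk, h₁₂⟩ := List.pairwise_append.mp h
  rw [List.filter_append, List.filter_eq_self.mpr fun a ha => by simpa using h₁₂ a ha k (by simp),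
    List.filter_eq_nil_iff.mpr, List.append_nil]
  intro a ha
  simp only [decide_eq_true_eq, not_lt]
  rcases List.mem_cons.mp ha with rfl | ha
  · exact le_rfl
  · exact ((List.pairwise_cons.mp hk).1 a ha).le

section Twist

variable {p n : ℕ} (ξ : Fin n → Matrix (Fin p) (Fin p) ℝ) (θ : Fin n → ℝ)

theorem isUnit_poeBefore (β : Fin n) : IsUnit (poeBefore ξ θ β) :=
  List.prod_isUnit fun _ hx => by
    obtain ⟨m, -, rfl⟩ := List.mem_map.mp hx
    exact Matrix.isUnit_exp _

theorem poeBefore_update_of_le {k β : Fin n} (h : β ≤ k) (s : ℝ) :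
    poeBefore ξ (Function.update θ k s) β = poeBefore ξ θ β := by
  refine congrArg List.prod (List.map_congr_left fun m hm => ?_)
  have hmβ : m < β := by simpa using (List.mem_filter.mp hm).2
  rw [Function.update_of_ne (hmβ.trans_le h).ne]

theorem poeBefore_update_of_lt {k β : Fin n} (h : k < β) :
    ∃ R, ∀ s : ℝ, poeBefore ξ (Function.update θ k s) β =
      poeBefore ξ θ k * NormedSpace.exp (s • ξ k) * R := by
  obtain ⟨l₁, l₂, hl⟩ := List.append_of_mem (a := k)
    (l := (List.finRange n).filter (· < β)) (by simpa using h)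
  have hsorted : (l₁ ++ k :: l₂).Pairwise (· < ·) := hl ▸ (List.pairwise_lt_finRange n).filter _
  have hl₁ : (List.finRange n).filter (· < k) = l₁ := by
    rw [← List.filter_lt_append_cons hsorted, ← hl, List.filter_filter]
    congr 1
    funext m
    simpa using fun hmk : m < k => hmk.trans h
  obtain ⟨-, hk, h₁₂⟩ := List.pairwise_append.mp hsorted
  refine ⟨(l₂.map fun m => NormedSpace.exp (θ m • ξ m)).prod, fun s => ?_⟩
  have map_update {l : List (Fin n)} (hkl : k ∉ l) :
      l.map (fun m => NormedSpace.exp (Function.update θ k s m • ξ m)) =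
        l.map fun m => NormedSpace.exp (θ m • ξ m) :=
    List.map_congr_left fun m hm => by rw [Function.update_of_ne (ne_of_mem_of_not_mem hm hkl)]
  unfold poeBefore
  rw [hl, hl₁, List.map_append, List.prod_append, List.map_cons, List.prod_cons,
    Function.update_self, ← mul_assoc,
    map_update fun hk₁ => lt_irrefl k (h₁₂ k hk₁ k List.mem_cons_self),
    map_update fun hk₂ => lt_irrefl k ((List.pairwise_cons.mp hk).1 k hk₂)]

theorem eta_update_of_le {k β : Fin n} (h : β ≤ k) (s : ℝ) :
    eta ξ (Function.update θ k s) β = eta ξ θ β := by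
  rw [eta, eta, poeBefore_update_of_le ξ θ h]

theorem eta_update_of_lt {k β : Fin n} (h : k < β) :
    ∃ Y, ∀ s : ℝ, eta ξ (Function.update θ k s) β =
      NormedSpace.exp (s • eta ξ θ k) * Y * NormedSpace.exp (-(s • eta ξ θ k)) := by
  obtain ⟨R, hR⟩ := poeBefore_update_of_lt ξ θ h
  set L := poeBefore ξ θ k
  have hLu : IsUnit L := isUnit_poeBefore ξ θ k
  have hL : IsUnit L.det := (Matrix.isUnit_iff_isUnit_det L).mp hLu
  have exp_conj (X : Matrix (Fin p) (Fin p) ℝ) :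
      NormedSpace.exp (L * X * L⁻¹) = L * NormedSpace.exp X * L⁻¹ :=
    Matrix.exp_conj L X hLu
  refine ⟨L * R * ξ β * R⁻¹ * L⁻¹, fun s => ?_⟩
  have hsmul : s • eta ξ θ k = L * (s • ξ k) * L⁻¹ := by
    rw [eta, Matrix.mul_smul, Matrix.smul_mul]
  rw [hsmul, ← neg_mul, ← mul_neg, exp_conj, exp_conj, Matrix.exp_neg, eta, hR,
    Matrix.mul_inv_rev, Matrix.mul_inv_rev]
  simp only [mul_assoc, Matrix.nonsing_inv_mul_cancel_left _ _ hL]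

end Twist

/-- Partial derivatives of the instantaneous joint twists:
if `k ≤ β − 1` then `∂η_β/∂θ_k = η_k η_β − η_β η_k`, and if `k ≥ β` then `∂η_β/∂θ_k = 0`. -/
theorem deriv_instantaneous_twist {p n : ℕ} (ξ : Fin n → Matrix (Fin p) (Fin p) ℝ)
    (θ : Fin n → ℝ) (k β : Fin n) :
    (k < β →
      HasDerivAt (fun s : ℝ => eta ξ (Function.update θ k s) β)
        (eta ξ θ k * eta ξ θ β - eta ξ θ β * eta ξ θ k) (θ k)) ∧
    (β ≤ k →
      HasDerivAt (fun s : ℝ => eta ξ (Function.update θ k s) β) 0 (θ k)) := by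
  refine ⟨fun h => ?_, fun h => ?_⟩
  · obtain ⟨Y, hY⟩ := eta_update_of_lt ξ θ h
    have hβ := hY (θ k)
    rw [Function.update_eq_self] at hβ
    rw [funext hY, hβ]
    exact Matrix.hasDerivAt_exp_smul_mul_mul_exp_neg_smul _ _ _
  · simp only [eta_update_of_le ξ θ h]
    exact hasDerivAt_const _ _
end
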